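/- arXiv:2208.07557 — 2 statements merged into one kernel-verified Lean document; each statement's English description precedes it below -/
import Mathlib

section
/- Let (A; ∧, d) be a regular SMB algebra over ~ and let a,b,c,e ∈ A. Then (c,e) ∈ Cg(a,b) ∨ ~ if and only if (c, e∧c) ∈ Cg(a,b) and (e, c∧e) ∈ Cg(a,b). -/
/-- An equivalence relation on `A` compatible with the binary operation `m`
and the ternary operation `d`, i.e. a congruence of the algebra `(A; m, d)`. -/
structure IsCongruence {A : Type*} (m : A → A → A) (d : A → A → A → A)
    (θ : A → A → Prop) : Prop where
  equiv : Equivalence θ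
  compat_m : ∀ {a a' b b'}, θ a a' → θ b b' → θ (m a b) (m a' b')
  compat_d : ∀ {a a' b b' c c'}, θ a a' → θ b b' → θ c c' → θ (d a b c) (d a' b' c')

/-- `(A; m, d)` is an SMB algebra over the congruence `r`. -/
structure IsSMB {A : Type*} (m : A → A → A) (d : A → A → A → A)
    (r : A → A → Prop) : Prop where
  cong : IsCongruence m d r
  idem_m : ∀ x, m x x = x
  idem_d : ∀ x, d x x x = x
  comm : ∀ x y, r (m x y) (m y x)
  assoc : ∀ x y z, r (m (m x y) z) (m x (m y z))
  proj : ∀ a b, r a b → m a b = b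
  mal_left : ∀ a b, r a b → d a b b = a
  mal_right : ∀ a b, r a b → d b b a = a

/-- `(A; m, d)` is a regular SMB algebra over the congruence `r`. -/
structure IsRegularSMB {A : Type*} (m : A → A → A) (d : A → A → A → A)
    (r : A → A → Prop) : Prop where
  smb : IsSMB m d r
  reg1 : ∀ a b c, r (d a b c) (m (m a b) c)
  reg2 : ∀ a b, r (m a b) b → m a b = b
  reg3 : ∀ x y z, d x y z = d (m (m y z) x) (m (m x z) y) (m (m x y) z)
  reg4 : ∀ x y, m (m x y) y = m x y

/-- The principal congruence generated by the pair `(a, b)`: the smallest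
congruence of `(A; m, d)` containing `(a, b)`. -/
def Cg {A : Type*} (m : A → A → A) (d : A → A → A → A) (a b : A) : A → A → Prop :=
  fun x y => ∀ θ : A → A → Prop, IsCongruence m d θ → θ a b → θ x y

/-- The join of two congruences: the smallest congruence of `(A; m, d)`
containing both `ρ` and `σ`. -/
def congJoin {A : Type*} (m : A → A → A) (d : A → A → A → A)
    (ρ σ : A → A → Prop) : A → A → Prop :=
  fun x y => ∀ θ : A → A → Prop, IsCongruence m d θ →
    (∀ u v, ρ u v → θ u v) → (∀ u v, σ u v → θ u v) → θ x y

/-!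
The join `Cg(a,b) ∨ ∼` is the reflexive-transitive closure of `Cg(a,b) ∪ ∼`. Along such a chain
starting at `c`, the property `c ≡ e∧c`, `e ≡ c∧e` (mod `Cg(a,b)`) of its endpoint `e` is
preserved: trivially by a `Cg(a,b)`-step, and by a `∼`-step because `∧` is the second projection
on `∼`-classes, so that `u ∼ v` turns `v ≡ w` into `v ≡ u∧w`; regularity `(x∧y)∧y = x∧y` then
brings the terms back to the required shape. Conversely `c ≡ e∧c ∼ c∧e ≡ e`.
-/

theorem Cg.isCongruence {A : Type*} (m : A → A → A) (d : A → A → A → A) (a b : A) :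
    IsCongruence m d (Cg m d a b) where
  equiv := ⟨fun x _ hθ _ => hθ.equiv.refl x,
    fun h θ hθ hab => hθ.equiv.symm (h θ hθ hab),
    fun h₁ h₂ θ hθ hab => hθ.equiv.trans (h₁ θ hθ hab) (h₂ θ hθ hab)⟩
  compat_m h₁ h₂ θ hθ hab := hθ.compat_m (h₁ θ hθ hab) (h₂ θ hθ hab)
  compat_d h₁ h₂ h₃ θ hθ hab := hθ.compat_d (h₁ θ hθ hab) (h₂ θ hθ hab) (h₃ θ hθ hab)

section

variable {A : Type*} {m : A → A → A} {d : A → A → A → A}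

namespace IsCongruence

variable {θ σ : A → A → Prop}

theorem reflTransGen_or (hθ : IsCongruence m d θ) (hσ : IsCongruence m d σ) :
    IsCongruence m d (Relation.ReflTransGen fun x y => θ x y ∨ σ x y) := by
  have step {f : A → A} (hθf : ∀ {x y}, θ x y → θ (f x) (f y))
      (hσf : ∀ {x y}, σ x y → σ (f x) (f y)) {x y : A}
      (hxy : Relation.ReflTransGen (fun x y => θ x y ∨ σ x y) x y) :
      Relation.ReflTransGen (fun x y => θ x y ∨ σ x y) (f x) (f y) :=
    hxy.lift f fun _ _ => Or.imp hθf hσf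
  have θr := hθ.equiv.refl
  have σr := hσ.equiv.refl
  refine ⟨⟨fun _ => .refl, fun hxy => ?_, .trans⟩, fun {a a' b b'} ha hb => ?_,
    fun {a a' b b' c c'} ha hb hc => ?_⟩
  · have : Std.Symm fun x y : A => θ x y ∨ σ x y :=
      ⟨fun _ _ => Or.imp hθ.equiv.symm hσ.equiv.symm⟩
    exact Std.Symm.symm _ _ hxy
  · exact (step (f := (m · b)) (hθ.compat_m · (θr b)) (hσ.compat_m · (σr b)) ha).trans
      (step (hθ.compat_m (θr a')) (hσ.compat_m (σr a')) hb)
  · exact ((step (f := (d · b c)) (hθ.compat_d · (θr b) (θr c))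
        (hσ.compat_d · (σr b) (σr c)) ha).trans
      (step (f := (d a' · c)) (hθ.compat_d (θr a') · (θr c))
        (hσ.compat_d (σr a') · (σr c)) hb)).trans
      (step (hθ.compat_d (θr a') (θr b')) (hσ.compat_d (σr a') (σr b')) hc)

theorem congJoin_iff_reflTransGen (hθ : IsCongruence m d θ) (hσ : IsCongruence m d σ)
    {x y : A} :
    congJoin m d θ σ x y ↔ Relation.ReflTransGen (fun x y => θ x y ∨ σ x y) x y := by
  refine ⟨fun hxy => hxy _ (hθ.reflTransGen_or hσ) (fun _ _ => .single ∘ .inl)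
    (fun _ _ => .single ∘ .inr), fun hxy Θ hΘ hθΘ hσΘ => ?_⟩
  induction hxy with
  | refl => exact hΘ.equiv.refl x
  | tail _ hst ih => exact hΘ.equiv.trans ih (hst.elim (hθΘ _ _) (hσΘ _ _))

theorem meet_rel_of_rel_right (hθ : IsCongruence m d θ) {c e f : A}
    (hc : θ c (m e c)) (he : θ e (m c e)) (hef : θ e f) :
    θ c (m f c) ∧ θ f (m c f) :=
  ⟨hθ.equiv.trans hc (hθ.compat_m hef (hθ.equiv.refl c)),
    hθ.equiv.trans (hθ.equiv.symm hef)
      (hθ.equiv.trans he (hθ.compat_m (hθ.equiv.refl c) hef))⟩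

end IsCongruence

variable {r θ : A → A → Prop}

theorem IsSMB.rel_meet_of_rel (hs : IsSMB m d r) (hθ : IsCongruence m d θ) {u v w : A}
    (huv : r u v) (hvw : θ v w) : θ v (m u w) := by
  simpa only [hs.proj u v huv] using hθ.compat_m (hθ.equiv.refl u) hvw

namespace IsRegularSMB

theorem meet_rel_of_rel_right (h : IsRegularSMB m d r) (hθ : IsCongruence m d θ) {c e f : A}
    (hc : θ c (m e c)) (he : θ e (m c e)) (hef : r e f) :
    θ c (m f c) ∧ θ f (m c f) := by
  have rr := h.smb.cong.equiv
  have θe := hθ.equiv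
  have hfc : θ c (m f c) := by
    have := h.smb.rel_meet_of_rel hθ (h.smb.cong.compat_m (rr.symm hef) (rr.refl c)) (θe.symm hc)
    rw [h.reg4] at this
    exact θe.trans hc this
  have hf : θ f (m (m c e) f) := by
    simpa only [h.smb.proj e f hef] using hθ.compat_m he (θe.refl f)
  have hr : r (m f c) (m (m c e) f) := by
    have := h.smb.cong.compat_m (h.smb.cong.compat_m (rr.refl c) hef) (rr.refl f)
    rw [h.reg4] at this
    exact rr.trans (h.smb.comm f c) (rr.symm this)
  have hcf : θ (m (m f c) f) (m c f) := θe.symm (hθ.compat_m hfc (θe.refl f))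
  exact ⟨hfc, θe.trans hf (θe.trans (h.smb.rel_meet_of_rel hθ hr (θe.symm hf)) hcf)⟩

theorem meet_rel_of_reflTransGen (h : IsRegularSMB m d r) (hθ : IsCongruence m d θ) {c e : A}
    (hce : Relation.ReflTransGen (fun x y => θ x y ∨ r x y) c e) :
    θ c (m e c) ∧ θ e (m c e) := by
  induction hce with
  | refl => simpa only [h.smb.idem_m] using ⟨hθ.equiv.refl c, hθ.equiv.refl c⟩
  | tail _ hst ih =>
    rcases hst with hθst | hrst
    · exact hθ.meet_rel_of_rel_right ih.1 ih.2 hθst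
    · exact h.meet_rel_of_rel_right hθ ih.1 ih.2 hrst

end IsRegularSMB

end

/-- In a regular SMB algebra, `(c,e) ∈ Cg(a,b) ∨ ~` iff
`(c, e∧c) ∈ Cg(a,b)` and `(e, c∧e) ∈ Cg(a,b)`. -/
theorem regular_smb_cg_join_characterization {A : Type*} (m : A → A → A)
    (d : A → A → A → A) (r : A → A → Prop) (h : IsRegularSMB m d r)
    (a b c e : A) :
    congJoin m d (Cg m d a b) r c e ↔
      (Cg m d a b c (m e c) ∧ Cg m d a b e (m c e)) := by
  have hθ := Cg.isCongruence m d a b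
  rw [hθ.congJoin_iff_reflTransGen h.smb.cong]
  refine ⟨h.meet_rel_of_reflTransGen hθ, fun ⟨hc, he⟩ => ?_⟩
  exact .tail (.tail (.single (.inl hc)) (.inr (h.smb.comm e c))) (.inl (hθ.equiv.symm he))
end

section
/- Let L be the first-order language with one binary function symbol ∧ and one ternary function symbol d, and let (A; ∧, d) be a regular SMB algebra over ~, regarded as an L-structure. Then for every L-term t in the variables x_1, …, x_n in which each of the variables x_1, …, x_n actually occurs, and for all a_1, …, a_n ∈ A, the value t(a_1, …, a_n) satisfies t(a_1, …, a_n) ~ (…((a_1∧a_2)∧a_3)…)∧a_n; that is, [t(a_1,…,a_n)]_~ equals the semilattice meet [a_1]_~ ∧ … ∧ [a_n]_~ in A/~. -/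
/-- Terms of the first-order language with one binary function symbol `∧` and
one ternary function symbol `d`, in variables indexed by `Fin k`. -/
inductive SMBTerm (k : ℕ) : Type
  | var : Fin k → SMBTerm k
  | meet : SMBTerm k → SMBTerm k → SMBTerm k
  | mal : SMBTerm k → SMBTerm k → SMBTerm k → SMBTerm k

/-- Evaluation of a term in the algebra `(A; m, d)` under the assignment `v`. -/
def SMBTerm.eval {A : Type*} (m : A → A → A) (d : A → A → A → A) {k : ℕ}
    (v : Fin k → A) : SMBTerm k → A
  | .var i => v i
  | .meet s t => m (s.eval m d v) (t.eval m d v)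
  | .mal s t u => d (s.eval m d v) (t.eval m d v) (u.eval m d v)

/-- The variable `i` occurs in the term `t`. -/
def SMBTerm.occurs {k : ℕ} (i : Fin k) : SMBTerm k → Prop
  | .var j => i = j
  | .meet s t => s.occurs i ∨ t.occurs i
  | .mal s t u => s.occurs i ∨ t.occurs i ∨ u.occurs i

/-
`A/~` is a semilattice, and by (R1) the quotient map sends `d(x, y, z)` to the meet
of the classes of `x`, `y`, `z`. Hence the class of `t(a₁, …, aₙ)` is the meet of the classes of
the variables occurring in `t`, which is all of them.
-/

section SemilatticeBounds

variable {Q : Type*} [SemilatticeInf Q]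

def SMBTerm.evalInf {k : ℕ} (v : Fin k → Q) : SMBTerm k → Q
  | .var i => v i
  | .meet s t => s.evalInf v ⊓ t.evalInf v
  | .mal s t u => s.evalInf v ⊓ t.evalInf v ⊓ u.evalInf v

theorem SMBTerm.le_evalInf_iff {k : ℕ} (v : Fin k → Q) (t : SMBTerm k) (z : Q) :
    z ≤ t.evalInf v ↔ ∀ i, t.occurs i → z ≤ v i := by
  induction t with
  | var j => simp [evalInf, occurs]
  | meet s t ihs iht => simp only [evalInf, occurs, le_inf_iff, ihs, iht, or_imp, forall_and]
  | mal s t u ihs iht ihu =>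
    simp only [evalInf, occurs, le_inf_iff, ihs, iht, ihu, or_imp, forall_and, and_assoc]

theorem List.le_foldl_inf_iff {β : Type*} (f : β → Q) (l : List β) (x z : Q) :
    z ≤ l.foldl (fun q y => q ⊓ f y) x ↔ z ≤ x ∧ ∀ y ∈ l, z ≤ f y := by
  induction l generalizing x with
  | nil => simp
  | cons y l ih => simp only [foldl_cons, ih, le_inf_iff, mem_cons, forall_eq_or_imp, and_assoc]

theorem List.le_foldl_inf_tail_ofFn_iff {β : Type*} (f : β → Q) {n : ℕ} (a : Fin (n + 1) → β)
    (z : Q) :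
    z ≤ (List.ofFn a).tail.foldl (fun q y => q ⊓ f y) (f (a 0)) ↔ ∀ i, z ≤ f (a i) := by
  rw [le_foldl_inf_iff, Fin.forall_fin_succ, List.ofFn_succ, tail_cons]
  simp only [mem_ofFn, forall_exists_index, forall_apply_eq_imp_iff]

end SemilatticeBounds

namespace IsSMB

variable {A : Type*} {m : A → A → A} {d : A → A → A → A} {r : A → A → Prop} (h : IsSMB m d r)

def setoid : Setoid A := ⟨r, h.cong.equiv⟩

def Classes : Type _ := Quotient h.setoid

def classOf (x : A) : h.Classes := Quotient.mk h.setoid x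

theorem classOf_eq_classOf_iff {x y : A} : h.classOf x = h.classOf y ↔ r x y := Quotient.eq

instance : SemilatticeInf h.Classes :=
  letI : Min h.Classes := ⟨Quotient.map₂ m fun _ _ hx _ _ hy => h.cong.compat_m hx hy⟩
  SemilatticeInf.mk'
    (fun p q => Quotient.inductionOn₂ p q fun x y => Quotient.sound (h.comm x y))
    (fun p q s => Quotient.inductionOn₃ p q s fun x y z => Quotient.sound (h.assoc x y z))
    (fun p => Quotient.inductionOn p fun x => congrArg h.classOf (h.idem_m x))

theorem classOf_inf_classOf (x y : A) : h.classOf x ⊓ h.classOf y = h.classOf (m x y) := rfl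

theorem classOf_foldl (l : List A) (x : A) :
    h.classOf (l.foldl m x) = l.foldl (fun q y => q ⊓ h.classOf y) (h.classOf x) :=
  (List.foldl_hom h.classOf fun x y => h.classOf_inf_classOf x y).symm

end IsSMB

theorem IsRegularSMB.classOf_eval {A : Type*} {m : A → A → A} {d : A → A → A → A}
    {r : A → A → Prop} (h : IsRegularSMB m d r) {k : ℕ} (v : Fin k → A) (t : SMBTerm k) :
    h.smb.classOf (t.eval m d v) = t.evalInf (h.smb.classOf ∘ v) := by
  induction t with
  | var i => rfl
  | meet s t ihs iht =>
    rw [SMBTerm.eval, ← h.smb.classOf_inf_classOf, ihs, iht]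
    rfl
  | mal s t u ihs iht ihu =>
    rw [SMBTerm.eval, h.smb.classOf_eq_classOf_iff.mpr (h.reg1 _ _ _),
      ← h.smb.classOf_inf_classOf, ← h.smb.classOf_inf_classOf, ihs, iht, ihu]
    rfl

/-- In a regular SMB algebra over `~`, the value of any term
`t(a₁, …, a_{n+1})` in which every variable occurs lies in the `~`-class
`[a₁]_~ ∧ … ∧ [a_{n+1}]_~`, i.e.
`t(a₁,…,a_{n+1}) ~ (…((a₁∧a₂)∧a₃)…)∧a_{n+1}`. -/
theorem regular_smb_term_class {A : Type*} (m : A → A → A) (d : A → A → A → A)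
    (r : A → A → Prop) (h : IsRegularSMB m d r) (n : ℕ)
    (t : SMBTerm (n + 1)) (ht : ∀ i : Fin (n + 1), t.occurs i)
    (a : Fin (n + 1) → A) :
    r (t.eval m d a) ((List.ofFn a).tail.foldl m (a 0)) := by
  refine h.smb.classOf_eq_classOf_iff.mp (eq_of_forall_le_iff fun z => ?_)
  rw [h.classOf_eval, SMBTerm.le_evalInf_iff, h.smb.classOf_foldl,
    List.le_foldl_inf_tail_ofFn_iff h.smb.classOf a]
  exact ⟨fun hz i => hz i (ht i), fun hz i _ => hz i⟩
end
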